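/- arXiv:1811.10071 — 5 statements merged into one kernel-verified Lean document; each statement's English description precedes it below -/
import Mathlib

section
/- Let X be a discrete random variable taking finitely many real values, with CDF F_X and probability mass function P_X, and let θ be uniformly distributed on [0,1] and independent of X. Then the random variable Y = F_X(X) − θ·P_X(X) is uniformly distributed on [0,1]. -/
/-!
Condition on the value `s` of `X`. Given `X = s`, the variable `Y` is uniform on the interval
`[F(s) - P(X = s), F(s)]`, so `P(X = s, Y ≤ t)` is the length of the part of that interval
below `t`, namely `min t F(s) - min t (F(s) - P(X = s))`. Since `F(s) - P(X = s) = P(X < s)`,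
these intervals tile `[0, 1]` as `s` runs through the values of `X`, and the sum telescopes
to `min t 1 - min t 0 = t`.
-/

open MeasureTheory Set Filter ProbabilityTheory

theorem Finset.sum_sub_sum_filter_lt_telescope {α β γ : Type*} [LinearOrder α]
    [AddCommMonoid β] [AddCommGroup γ] (S : Finset α) (w : α → β) (g : β → γ) :
    ∑ s ∈ S, (g (∑ r ∈ S with r ≤ s, w r) - g (∑ r ∈ S with r < s, w r)) =
      g (∑ r ∈ S, w r) - g 0 := by
  classical
  induction S using Finset.induction_on_max with
  | empty => simp
  | insert a S hlt ih =>
    have ha : a ∉ S := fun h => lt_irrefl a (hlt a h)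
    have hle : ∀ s ∈ S, {r ∈ insert a S | r ≤ s} = {r ∈ S | r ≤ s} := fun s hs => by
      rw [Finset.filter_insert, if_neg (hlt s hs).not_ge]
    have hlt' : ∀ s ∈ S, {r ∈ insert a S | r < s} = {r ∈ S | r < s} := fun s hs => by
      rw [Finset.filter_insert, if_neg (hlt s hs).not_gt]
    have hle_a : {r ∈ insert a S | r ≤ a} = insert a S :=
      Finset.filter_true_of_mem fun r hr => by
        rcases Finset.mem_insert.mp hr with rfl | hr
        exacts [le_rfl, (hlt r hr).le]
    have hlt_a : {r ∈ insert a S | r < a} = S := by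
      rw [Finset.filter_insert, if_neg (lt_irrefl a), Finset.filter_true_of_mem hlt]
    have hrest : ∑ s ∈ S, (g (∑ r ∈ insert a S with r ≤ s, w r) -
        g (∑ r ∈ insert a S with r < s, w r)) = g (∑ r ∈ S, w r) - g 0 := by
      rw [← ih]
      exact Finset.sum_congr rfl fun s hs => by rw [hle s hs, hlt' s hs]
    rw [Finset.sum_insert ha, hle_a, hlt_a, hrest]
    abel

lemma mul_one_sub_max_min_div {p a b t : ℝ} (hp : 0 < p) (hab : b - a = p) :
    p * (1 - max 0 (min ((b - t) / p) 1)) = min t b - min t a := by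
  rw [mul_sub, mul_one, mul_max_of_nonneg _ _ hp.le, mul_min_of_nonneg _ _ hp.le,
    mul_div_cancel₀ _ hp.ne', mul_zero, mul_one]
  simp only [max_def, min_def]
  split_ifs <;> linarith

section FiniteRange

variable {Ω β : Type*} [MeasurableSpace Ω] {μ : Measure Ω} {X : Ω → β} {S : Finset β}

lemma measure_setOf_eq_sum_preimage_singleton_inter (hS : ∀ ω, X ω ∈ S) (q : β → Ω → Prop)
    (hq : ∀ s ∈ S, MeasurableSet (X ⁻¹' {s} ∩ {ω | q s ω})) :
    μ {ω | q (X ω) ω} = ∑ s ∈ S, μ (X ⁻¹' {s} ∩ {ω | q s ω}) := by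
  have hunion : {ω | q (X ω) ω} = ⋃ s ∈ S, X ⁻¹' {s} ∩ {ω | q s ω} := by
    ext ω
    simp [hS]
  rw [hunion, measure_biUnion_finset
    ((pairwiseDisjoint_fiber X _).mono fun _ => inter_subset_left) hq]

lemma measureReal_setOf_eq_sum_filter [MeasurableSpace β] [MeasurableSingletonClass β]
    [IsFiniteMeasure μ] (hX : Measurable X) (hS : ∀ ω, X ω ∈ S) (p : β → Prop)
    [DecidablePred p] :
    μ.real {ω | p (X ω)} = ∑ s ∈ S with p s, μ.real (X ⁻¹' {s}) := by
  rw [sum_measureReal_preimage_singleton _ fun s _ => hX (measurableSet_singleton s)]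
  congr 1
  ext ω
  simp [hS]

lemma measureReal_setOf_lt_eq_sub [LinearOrder β] [MeasurableSpace β]
    [MeasurableSingletonClass β] [IsFiniteMeasure μ] (hX : Measurable X) (s : β) :
    μ.real {ω | X ω < s} = μ.real {ω | X ω ≤ s} - μ.real (X ⁻¹' {s}) := by
  have hlt : {ω | X ω < s} = {ω | X ω ≤ s} \ X ⁻¹' {s} := by
    ext ω
    simp [lt_iff_le_and_ne]
  rw [hlt]
  exact measureReal_sdiff (fun ω (hω : X ω = s) => hω.le) (hX (measurableSet_singleton s))

end FiniteRange

section UniformCDF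

variable {Ω : Type*} [MeasurableSpace Ω] {P : Measure Ω} [IsProbabilityMeasure P] {θ : Ω → ℝ}

lemma measure_lt_eq_of_forall_measure_le_eq
    (hunif : ∀ t ∈ Icc (0 : ℝ) 1, P {ω | θ ω ≤ t} = ENNReal.ofReal t) (c : ℝ) :
    P {ω | θ ω < c} = ENNReal.ofReal (max 0 (min c 1)) := by
  have hle_of_lt : ∀ {a b : ℝ}, a < b → {ω | θ ω ≤ a} ⊆ {ω | θ ω < b} :=
    fun hab ω hω => lt_of_le_of_lt hω hab
  rcases le_or_gt c 0 with hc0 | hc0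
  · have hzero : P {ω | θ ω ≤ 0} = 0 := by simpa using hunif 0 (by simp)
    rw [max_eq_left (min_le_of_left_le hc0), ENNReal.ofReal_zero]
    exact measure_mono_null (fun ω hω => le_of_lt (lt_of_lt_of_le hω hc0)) hzero
  rcases lt_or_ge 1 c with hc1 | hc1
  · have hone : P {ω | θ ω ≤ 1} = 1 := by simpa using hunif 1 (by simp)
    rw [min_eq_right hc1.le, max_eq_right zero_le_one, ENNReal.ofReal_one]
    exact le_antisymm prob_le_one (hone ▸ measure_mono (hle_of_lt hc1))
  rw [min_eq_left hc1, max_eq_right hc0.le]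
  refine le_antisymm ?_ ?_
  · calc P {ω | θ ω < c} ≤ P {ω | θ ω ≤ c} := measure_mono fun ω (hω : θ ω < c) => hω.le
      _ = ENNReal.ofReal c := hunif c ⟨hc0.le, hc1⟩
  · -- `P {θ < c}` dominates `P {θ ≤ c'} = c'` for every `c' < c`.
    refine le_of_tendsto (ENNReal.tendsto_ofReal
      (tendsto_nhdsWithin_of_tendsto_nhds (s := Iio c) tendsto_id)) ?_
    filter_upwards [Ioo_mem_nhdsLT hc0] with c' hc'
    rw [id, ← hunif c' ⟨hc'.1.le, hc'.2.le.trans hc1⟩]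
    exact measure_mono (hle_of_lt hc'.2)

lemma measure_ge_eq_of_forall_measure_le_eq (hθ : Measurable θ)
    (hunif : ∀ t ∈ Icc (0 : ℝ) 1, P {ω | θ ω ≤ t} = ENNReal.ofReal t) (c : ℝ) :
    P {ω | c ≤ θ ω} = ENNReal.ofReal (1 - max 0 (min c 1)) := by
  have hcompl : {ω | c ≤ θ ω} = {ω | θ ω < c}ᶜ := by ext; simp
  rw [hcompl, prob_compl_eq_one_sub (measurableSet_lt hθ measurable_const),
    measure_lt_eq_of_forall_measure_le_eq hunif, ENNReal.ofReal_sub _ (le_max_left _ _),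
    ENNReal.ofReal_one]

lemma ProbabilityTheory.IndepFun.measure_preimage_singleton_inter_sub_mul_le {β : Type*}
    [MeasurableSpace β] [MeasurableSingletonClass β] {X : Ω → β} (hindep : IndepFun X θ P)
    (hθ : Measurable θ) (hunif : ∀ t ∈ Icc (0 : ℝ) 1, P {ω | θ ω ≤ t} = ENNReal.ofReal t)
    (s : β) (b t : ℝ) :
    P (X ⁻¹' {s} ∩ {ω | b - θ ω * P.real (X ⁻¹' {s}) ≤ t}) =
      ENNReal.ofReal (min t b - min t (b - P.real (X ⁻¹' {s}))) := by
  set p := P.real (X ⁻¹' {s})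
  have hB : MeasurableSet {u : ℝ | b - u * p ≤ t} :=
    measurableSet_le (by fun_prop) measurable_const
  rw [show {ω | b - θ ω * p ≤ t} = θ ⁻¹' {u | b - u * p ≤ t} from rfl,
    hindep.measure_inter_preimage_eq_mul _ _ (measurableSet_singleton s) hB]
  rcases (show 0 ≤ p from measureReal_nonneg).eq_or_lt with hp | hp
  · rw [(measureReal_eq_zero_iff (μ := P)).mp hp.symm, zero_mul, ← hp, sub_zero, sub_self,
      ENNReal.ofReal_zero]
  · have hθB : θ ⁻¹' {u | b - u * p ≤ t} = {ω | (b - t) / p ≤ θ ω} := by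
      ext ω
      change b - θ ω * p ≤ t ↔ (b - t) / p ≤ θ ω
      rw [div_le_iff₀ hp]
      constructor <;> intro h <;> linarith
    rw [hθB, measure_ge_eq_of_forall_measure_le_eq hθ hunif,
      ← ofReal_measureReal (μ := P) (s := X ⁻¹' {s}),
      ← ENNReal.ofReal_mul hp.le, mul_one_sub_max_min_div hp (sub_sub_cancel b p)]

end UniformCDF

/-- For a discrete random variable `X` with finitely many values, CDF `F` and pmf `pm`,
and `θ ~ Unif[0,1]` independent of `X`, the variable `Y = F(X) - θ·pm(X)` is uniform on `[0,1]`. -/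
theorem discrete_randomized_cdf_uniform
    {Ω : Type*} [MeasurableSpace Ω] (P : Measure Ω) [IsProbabilityMeasure P]
    (X θ : Ω → ℝ) (hX : Measurable X) (hθ : Measurable θ)
    (hfin : (Set.range X).Finite)
    (hindep : ProbabilityTheory.IndepFun X θ P)
    (hunif : ∀ t ∈ Icc (0 : ℝ) 1, P {ω | θ ω ≤ t} = ENNReal.ofReal t)
    (F pm : ℝ → ℝ)
    (hF : ∀ x, F x = (P {ω | X ω ≤ x}).toReal)
    (hpm : ∀ x, pm x = (P {ω | X ω = x}).toReal) :
    ∀ t ∈ Icc (0 : ℝ) 1,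
      P {ω | F (X ω) - θ ω * pm (X ω) ≤ t} = ENNReal.ofReal t := by
  rintro t ⟨ht0, ht1⟩
  set S := hfin.toFinset
  have hS : ∀ ω, X ω ∈ S := fun ω => hfin.mem_toFinset.mpr (mem_range_self ω)
  have hpm_real : ∀ s, pm s = P.real (X ⁻¹' {s}) := hpm
  have hF_sum : ∀ s, F s = ∑ r ∈ S with r ≤ s, pm r := fun s => by
    simp only [hF, hpm_real]
    exact measureReal_setOf_eq_sum_filter hX hS (· ≤ s)
  have hF_sub_sum : ∀ s, F s - pm s = ∑ r ∈ S with r < s, pm r := fun s => by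
    rw [hF, hpm_real, ← measureReal_def, ← measureReal_setOf_lt_eq_sub hX]
    simp only [hpm_real]
    exact measureReal_setOf_eq_sum_filter hX hS (· < s)
  have hsum_pm : ∑ r ∈ S, pm r = 1 := by
    simpa [hpm_real] using (measureReal_setOf_eq_sum_filter (μ := P) hX hS (fun _ => True)).symm
  rw [measure_setOf_eq_sum_preimage_singleton_inter hS (fun s ω => F s - θ ω * pm s ≤ t)
    fun s _ => (hX (measurableSet_singleton s)).inter
      (measurableSet_le (by fun_prop) measurable_const)]
  calc ∑ s ∈ S, P (X ⁻¹' {s} ∩ {ω | F s - θ ω * pm s ≤ t})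
      = ∑ s ∈ S, ENNReal.ofReal (min t (F s) - min t (F s - pm s)) :=
        Finset.sum_congr rfl fun s _ => by
          rw [hpm_real]
          exact hindep.measure_preimage_singleton_inter_sub_mul_le hθ hunif s (F s) t
    _ = ENNReal.ofReal (∑ s ∈ S, (min t (F s) - min t (F s - pm s))) :=
        (ENNReal.ofReal_sum_of_nonneg fun s _ => sub_nonneg.mpr (min_le_min_left t
          (sub_le_self _ (hpm_real s ▸ measureReal_nonneg)))).symm
    _ = ENNReal.ofReal t := by
        simp_rw [hF_sub_sum, hF_sum]
        rw [Finset.sum_sub_sum_filter_lt_telescope, hsum_pm, min_eq_left ht1,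
          min_eq_right ht0, sub_zero]
end

section
/- Let X and Y be binary random variables with P(X=0)=α and P(Y=0)=β, where 0 < α ≤ β < 1/2. Then for any joint distribution of (X,Y) consistent with these marginals, the mutual information satisfies I(X;Y) ≤ h_b(β) − (1−α)·h_b((β−α)/(1−α)), where h_b is the binary entropy function, and this bound is achieved by some joint distribution. -/
open Real

/-- Binary entropy (natural log). -/
noncomputable def binEnt (p : ℝ) : ℝ := -(p * Real.log p) - (1 - p) * Real.log (1 - p)

/-- Mutual information of a joint distribution `p` on `{0,1} × {0,1}`. -/
noncomputable def mutInfo2 (p : Fin 2 → Fin 2 → ℝ) : ℝ :=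
  ∑ i : Fin 2, ∑ j : Fin 2,
    p i j * Real.log (p i j / ((p i 0 + p i 1) * (p 0 j + p 1 j)))

/-- A joint distribution on `{0,1}×{0,1}` with marginals `P(X=0)=α`, `P(Y=0)=β`. -/
def JointWithMarginals (p : Fin 2 → Fin 2 → ℝ) (α β : ℝ) : Prop :=
  (∀ i j, 0 ≤ p i j) ∧ (∑ i : Fin 2, ∑ j : Fin 2, p i j = 1) ∧
    (p 0 0 + p 0 1 = α) ∧ (p 0 0 + p 1 0 = β)

lemma binEnt_eq (p : ℝ) : binEnt p = Real.binEntropy p := by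
  unfold binEnt Real.binEntropy
  rw [Real.log_inv, Real.log_inv]; ring

lemma split_log (x r c : ℝ) (hx : 0 ≤ x) (hr : 0 < r) (hc : 0 < c) :
    x * Real.log (x / (r * c)) = x * Real.log (x / r) - x * Real.log c := by
  rcases eq_or_lt_of_le hx with h | h
  · simp [← h]
  · rw [div_mul_eq_div_div, Real.log_div (div_ne_zero h.ne' hr.ne') hc.ne']; ring

lemma pair_entropy (r x y : ℝ) (hr : 0 < r) (hxy : x + y = r) :
    x * Real.log (x / r) + y * Real.log (y / r) = -(r * binEnt (x / r)) := by
  have h1 : 1 - x / r = y / r := by field_simp; linarith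
  unfold binEnt
  rw [h1]
  field_simp
  ring

lemma mutInfo_eq (α β : ℝ) (p : Fin 2 → Fin 2 → ℝ) (h : JointWithMarginals p α β)
    (hα : 0 < α) (hα1 : α < 1) (hβ : 0 < β) (hβ1 : β < 1) :
    mutInfo2 p = binEnt β -
      (α * binEnt (p 0 0 / α) + (1 - α) * binEnt (p 1 0 / (1 - α))) := by
  obtain ⟨hnn, hsum, hrow, hcol⟩ := h
  simp only [Fin.sum_univ_two] at hsum
  have hd : 0 < 1 - α := by linarith
  have hb1 : 0 < 1 - β := by linarith
  have hrow1 : p 1 0 + p 1 1 = 1 - α := by linarith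
  have hcol1 : p 0 1 + p 1 1 = 1 - β := by linarith
  have e1 : mutInfo2 p =
      p 0 0 * Real.log (p 0 0 / (α * β)) + p 0 1 * Real.log (p 0 1 / (α * (1 - β)))
      + (p 1 0 * Real.log (p 1 0 / ((1 - α) * β))
      + p 1 1 * Real.log (p 1 1 / ((1 - α) * (1 - β)))) := by
    unfold mutInfo2
    simp only [Fin.sum_univ_two]
    rw [hrow, hrow1, hcol, hcol1]
  rw [e1, split_log _ _ _ (hnn 0 0) hα hβ, split_log _ _ _ (hnn 0 1) hα hb1,
    split_log _ _ _ (hnn 1 0) hd hβ, split_log _ _ _ (hnn 1 1) hd hb1]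
  have hp0 := pair_entropy α (p 0 0) (p 0 1) hα hrow
  have hp1 := pair_entropy (1 - α) (p 1 0) (p 1 1) hd hrow1
  have hb : binEnt β = -(β * Real.log β) - (1 - β) * Real.log (1 - β) := rfl
  have h1 : p 0 0 * Real.log β + p 1 0 * Real.log β = β * Real.log β := by
    rw [← add_mul, hcol]
  have h2 : p 0 1 * Real.log (1 - β) + p 1 1 * Real.log (1 - β)
      = (1 - β) * Real.log (1 - β) := by rw [← add_mul, hcol1]
  linarith

lemma binEnt_le_binEnt (α β : ℝ) (hα : 0 < α) (hαβ : α ≤ β) (hβ : β < 1 / 2) :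
    binEnt ((β - α) / (1 - α)) ≤ binEnt (β / (1 - α)) := by
  have hd : 0 < 1 - α := by linarith
  have hq0 : 0 ≤ (β - α) / (1 - α) := div_nonneg (by linarith) hd.le
  have hqh : (β - α) / (1 - α) ≤ 1 / 2 := by rw [div_le_iff₀ hd]; linarith
  rw [binEnt_eq, binEnt_eq]
  rcases le_or_gt (β / (1 - α)) (1 / 2) with hc | hc
  · exact Real.binEntropy_strictMonoOn.monotoneOn
      ⟨hq0, by norm_num; linarith⟩
      ⟨div_nonneg (by linarith) hd.le, by norm_num; linarith⟩
      (div_le_div_of_nonneg_right (by linarith) hd.le)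
  · rw [← Real.binEntropy_one_sub (β / (1 - α))]
    have h1x : 1 - β / (1 - α) = (1 - α - β) / (1 - α) := by field_simp
    rw [h1x]
    apply Real.binEntropy_strictMonoOn.monotoneOn
      ⟨hq0, by norm_num; linarith⟩
      ⟨div_nonneg (by linarith) hd.le, by norm_num; rw [← h1x]; linarith⟩
    exact div_le_div_of_nonneg_right (by linarith) hd.le

lemma key_ineq (α β u : ℝ) (hα : 0 < α) (hαβ : α ≤ β) (hβ : β < 1 / 2)
    (hu0 : 0 ≤ u) (hu1 : u ≤ 1) :
    (1 - α) * binEnt ((β - α) / (1 - α)) ≤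
      α * binEnt u + (1 - α) * binEnt ((β - α * u) / (1 - α)) := by
  have hd : 0 < 1 - α := by linarith
  have hq0 : 0 ≤ (β - α) / (1 - α) := div_nonneg (by linarith) hd.le
  have hq1 : (β - α) / (1 - α) ≤ 1 := by rw [div_le_one hd]; linarith
  have hx0 : 0 ≤ β / (1 - α) := div_nonneg (by linarith) hd.le
  have hx1 : β / (1 - α) ≤ 1 := by rw [div_le_one hd]; linarith
  have hcomb : (1 - u) • (β / (1 - α)) + u • ((β - α) / (1 - α))
      = (β - α * u) / (1 - α) := by
    simp only [smul_eq_mul]; field_simp; ring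
  have hconc := (Real.strictConcave_binEntropy.concaveOn).2
      (Set.mem_Icc.mpr ⟨hx0, hx1⟩) (Set.mem_Icc.mpr ⟨hq0, hq1⟩)
      (by linarith : (0:ℝ) ≤ 1 - u) hu0 (by ring)
  rw [hcomb] at hconc
  simp only [smul_eq_mul] at hconc
  have hmono := binEnt_le_binEnt α β hα hαβ hβ
  have hnn : 0 ≤ binEnt u := by
    rw [binEnt_eq]; exact Real.binEntropy_nonneg hu0 hu1
  simp only [binEnt_eq] at hmono hnn ⊢
  have h1 := mul_le_mul_of_nonneg_left hconc hd.le
  have h2 := mul_le_mul_of_nonneg_left hmono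
    (mul_nonneg hd.le (by linarith : (0:ℝ) ≤ 1 - u))
  have h3 : 0 ≤ α * Real.binEntropy u := mul_nonneg hα.le hnn
  nlinarith [h1, h2, h3]

/-- For binary `X`, `Y` with `P(X=0)=α ≤ P(Y=0)=β < 1/2`, the maximal mutual information
over all couplings is `h_b(β) − (1−α)·h_b((β−α)/(1−α))`. -/
theorem max_mutual_info_beta_ge_alpha (α β : ℝ)
    (hα : 0 < α) (hαβ : α ≤ β) (hβ : β < 1 / 2) :
    (∀ p : Fin 2 → Fin 2 → ℝ, JointWithMarginals p α β →
        mutInfo2 p ≤ binEnt β - (1 - α) * binEnt ((β - α) / (1 - α))) ∧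
    (∃ p : Fin 2 → Fin 2 → ℝ, JointWithMarginals p α β ∧
        mutInfo2 p = binEnt β - (1 - α) * binEnt ((β - α) / (1 - α))) := by
  have hβ0 : 0 < β := lt_of_lt_of_le hα hαβ
  have hα1 : α < 1 := by linarith
  have hβ1 : β < 1 := by linarith
  constructor
  · intro p hp
    have hid := mutInfo_eq α β p hp hα hα1 hβ0 hβ1
    obtain ⟨hnn, hsum, hrow, hcol⟩ := hp
    have hu0 : 0 ≤ p 0 0 / α := div_nonneg (hnn 0 0) hα.le
    have hu1 : p 0 0 / α ≤ 1 := by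
      rw [div_le_one hα]
      have := hnn 0 1; linarith
    have hrewrite : p 1 0 = β - α * (p 0 0 / α) := by
      field_simp; linarith
    rw [hid, hrewrite]
    have := key_ineq α β (p 0 0 / α) hα hαβ hβ hu0 hu1
    linarith
  · have hjm : JointWithMarginals ![![α, 0], ![β - α, 1 - β]] α β := by
      refine ⟨?_, ?_, ?_, ?_⟩
      · intro i j; fin_cases i <;> fin_cases j <;> simp <;> try linarith
      · simp [Fin.sum_univ_two]; try linarith
      · simp
      · simp
    refine ⟨![![α, 0], ![β - α, 1 - β]], hjm, ?_⟩
    rw [mutInfo_eq α β _ hjm hα hα1 hβ0 hβ1]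
    have e1 : (![![α, 0], ![β - α, 1 - β]] : Fin 2 → Fin 2 → ℝ) 0 0 = α := rfl
    have e2 : (![![α, 0], ![β - α, 1 - β]] : Fin 2 → Fin 2 → ℝ) 1 0 = β - α := rfl
    rw [e1, e2, div_self hα.ne']
    have h1 : binEnt 1 = 0 := by rw [binEnt_eq]; exact Real.binEntropy_one
    rw [h1]
    ring
end

section
/- Let X and Y be binary random variables with P(X=0)=α and P(Y=0)=β, where 0 < β < α < 1/2. Then for any joint distribution of (X,Y) consistent with these marginals, I(X;Y) ≤ h_b(β) − α·h_b(β/α), and this bound is achieved. -/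
open Real

/-!
Write `t = P(X = 0, Y = 0) ∈ [0, β]`, so that the cells of the joint distribution are
`t, α - t, β - t, 1 - α - β + t`. Since `I(X;Y) = h(α) + h(β) - H(X,Y)`, maximising the mutual
information means minimising the joint entropy `∑ φ(p i j)`, `φ x = -x log x`. For concave `φ`,
moving two arguments apart while keeping their sum fixed can only decrease `φ a + φ b`. Pairing
the cells as `(t, β - t)` and `(α - t, 1 - α - β + t)` and pushing them apart to `(0, β)` and
`(α - β, 1 - α)` (this is where `α ≤ 1/2` enters) shows that the coupling with `t = β` has the
least joint entropy.
-/

theorem ConcaveOn.add_le_add_of_add_eq {s : Set ℝ} {f : ℝ → ℝ} (hf : ConcaveOn ℝ s f)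
    {a b c d : ℝ} (hc : c ∈ s) (hd : d ∈ s) (hca : c ≤ a) (hcb : c ≤ b)
    (habcd : a + b = c + d) : f c + f d ≤ f a + f b := by
  rcases (show c ≤ d by linarith).eq_or_lt with rfl | hcd
  · obtain rfl : a = c := by linarith
    obtain rfl : b = a := by linarith
    rfl
  · set θ := (d - a) / (d - c)
    have hθ : 0 ≤ θ := div_nonneg (by linarith) (by linarith)
    have hθ' : 0 ≤ 1 - θ := by
      rw [sub_nonneg, div_le_one (by linarith)]; linarith
    have ha : θ • c + (1 - θ) • d = a := by
      simp only [θ, smul_eq_mul]; field_simp; ring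
    have hb : (1 - θ) • c + θ • d = b := by
      rw [show b = c + d - a by linarith]
      simp only [θ, smul_eq_mul]; field_simp; ring
    have hfa := hf.2 hc hd hθ hθ' (by ring)
    have hfb := hf.2 hc hd hθ' hθ (by ring)
    rw [ha] at hfa
    rw [hb] at hfb
    simp only [smul_eq_mul] at hfa hfb
    linarith

noncomputable def jointEnt (p : Fin 2 → Fin 2 → ℝ) : ℝ :=
  ∑ i : Fin 2, ∑ j : Fin 2, negMulLog (p i j)

lemma mul_log_div_mul {x r s : ℝ} (hr : r ≠ 0) (hs : s ≠ 0) :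
    x * log (x / (r * s)) = x * log x - x * log r - x * log s := by
  rcases eq_or_ne x 0 with rfl | hx
  · simp
  · rw [log_div hx (mul_ne_zero hr hs), log_mul hr hs]; ring

lemma mutInfo2_eq_binEnt_add_binEnt_sub_jointEnt {p : Fin 2 → Fin 2 → ℝ} {α β : ℝ}
    (hp : JointWithMarginals p α β) (hα₀ : α ≠ 0) (hα₁ : α ≠ 1) (hβ₀ : β ≠ 0) (hβ₁ : β ≠ 1) :
    mutInfo2 p = binEnt α + binEnt β - jointEnt p := by
  obtain ⟨-, hsum, hrow, hcol⟩ := hp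
  simp only [Fin.sum_univ_two] at hsum
  have hrow' : p 1 0 + p 1 1 = 1 - α := by linarith
  have hcol' : p 0 1 + p 1 1 = 1 - β := by linarith
  have h01 : p 0 1 = α - p 0 0 := by linarith
  have h10 : p 1 0 = β - p 0 0 := by linarith
  have h11 : p 1 1 = 1 - α - β + p 0 0 := by linarith
  have hα₁' : 1 - α ≠ 0 := sub_ne_zero.mpr hα₁.symm
  have hβ₁' : 1 - β ≠ 0 := sub_ne_zero.mpr hβ₁.symm
  simp only [mutInfo2, jointEnt, Fin.sum_univ_two, hrow, hcol, hrow', hcol', negMulLog,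
    mul_log_div_mul hα₀ hβ₀, mul_log_div_mul hα₀ hβ₁', mul_log_div_mul hα₁' hβ₀,
    mul_log_div_mul hα₁' hβ₁', binEnt]
  rw [h01, h10, h11]
  ring

/-- The coupling that puts all of `{Y = 0}` inside `{X = 0}`. -/
def maxCoupling (α β : ℝ) : Fin 2 → Fin 2 → ℝ :=
  ![![β, α - β], ![0, 1 - α]]

lemma jointWithMarginals_maxCoupling {α β : ℝ} (hβ : 0 ≤ β) (hβα : β ≤ α) (hα : α ≤ 1) :
    JointWithMarginals (maxCoupling α β) α β := by
  refine ⟨?_, ?_, ?_, ?_⟩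
  · intro i j
    fin_cases i <;> fin_cases j <;> simp [maxCoupling] <;> linarith
  all_goals simp [maxCoupling, Fin.sum_univ_two]

lemma jointEnt_maxCoupling_le {p : Fin 2 → Fin 2 → ℝ} {α β : ℝ}
    (hp : JointWithMarginals p α β) (hβα : β ≤ α) (hα : α ≤ 1 / 2) :
    jointEnt (maxCoupling α β) ≤ jointEnt p := by
  obtain ⟨hnn, hsum, hrow, hcol⟩ := hp
  simp only [Fin.sum_univ_two] at hsum
  have h00 := hnn 0 0
  have h10 := hnn 1 0
  have hpair₁ : negMulLog 0 + negMulLog β ≤ negMulLog (p 0 0) + negMulLog (p 1 0) :=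
    concaveOn_negMulLog.add_le_add_of_add_eq Set.self_mem_Ici (Set.mem_Ici.mpr (by linarith))
      h00 h10 (by linarith)
  have hpair₂ : negMulLog (α - β) + negMulLog (1 - α) ≤
      negMulLog (p 0 1) + negMulLog (p 1 1) :=
    concaveOn_negMulLog.add_le_add_of_add_eq (Set.mem_Ici.mpr (by linarith))
      (Set.mem_Ici.mpr (by linarith))
      (by linarith) (by linarith) (by linarith)
  simp only [jointEnt, maxCoupling, Fin.sum_univ_two, Matrix.cons_val_zero, Matrix.cons_val_one,
    Matrix.cons_val_fin_one, negMulLog_zero, zero_add] at hpair₁ ⊢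
  linarith

lemma mutInfo2_maxCoupling {α β : ℝ} (hβ : 0 < β) (hβα : β < α) (hα : α < 1) :
    mutInfo2 (maxCoupling α β) = binEnt β - α * binEnt (β / α) := by
  have hα₀ : 0 < α := hβ.trans hβα
  have hαβ : 0 < α - β := sub_pos.mpr hβα
  have h1 : 1 - β / α = (α - β) / α := by field_simp
  rw [mutInfo2_eq_binEnt_add_binEnt_sub_jointEnt
    (jointWithMarginals_maxCoupling hβ.le hβα.le hα.le) hα₀.ne' (by linarith) hβ.ne' (by linarith)]
  simp only [jointEnt, maxCoupling, binEnt, Fin.sum_univ_two, Matrix.cons_val_zero,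
    Matrix.cons_val_one, Matrix.cons_val_fin_one, h1, negMulLog,
    log_div hβ.ne' hα₀.ne', log_div hαβ.ne' hα₀.ne']
  field_simp
  ring

/-- For binary `X`, `Y` with `P(Y=0)=β < P(X=0)=α < 1/2`, the maximal mutual information
over all couplings is `h_b(β) − α·h_b(β/α)`. -/
theorem max_mutual_info_beta_lt_alpha (α β : ℝ)
    (hβpos : 0 < β) (hβα : β < α) (hα : α < 1 / 2) :
    (∀ p : Fin 2 → Fin 2 → ℝ, JointWithMarginals p α β →
        mutInfo2 p ≤ binEnt β - α * binEnt (β / α)) ∧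
    (∃ p : Fin 2 → Fin 2 → ℝ, JointWithMarginals p α β ∧
        mutInfo2 p = binEnt β - α * binEnt (β / α)) := by
  have hα₀ : 0 < α := hβpos.trans hβα
  have hmax := jointWithMarginals_maxCoupling hβpos.le hβα.le (by linarith)
  have hI := mutInfo2_maxCoupling hβpos hβα (by linarith)
  refine ⟨fun p hp => ?_, ⟨_, hmax, hI⟩⟩
  rw [← hI, mutInfo2_eq_binEnt_add_binEnt_sub_jointEnt hp hα₀.ne' (by linarith) hβpos.ne'
      (by linarith), mutInfo2_eq_binEnt_add_binEnt_sub_jointEnt hmax hα₀.ne' (by linarith)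
      hβpos.ne' (by linarith)]
  linarith [jointEnt_maxCoupling_le hp hβα.le hα.le]
end

section
/- For all real numbers α₁, α₂ with 0 < α₁ < α₂ < 1/2, the following inequality holds: α₂/(1−α₁+α₂) < [h_b(α₂) − h_b(α₁) + α₂·h_b(α₁/α₂)] / [α₂·h_b(α₁/α₂) + (1−α₁)·h_b((α₂−α₁)/(1−α₁))]. -/
/-!
Write `h` for the binary entropy; the base of the logarithm cancels. The numerator is the
grouping (chain-rule) identity in disguise: it equals `(1 - α₁) h((α₂ - α₁)/(1 - α₁))`. After
clearing denominators the claim becomes `α₂² h(α₁/α₂) < (1 - α₁)² h((α₂ - α₁)/(1 - α₁))`. Since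
`h(α₁/α₂) = h((α₂ - α₁)/α₂)`, this follows from `α₂ < 1 - α₁` together with the fact that
`h(p)/p` is strictly decreasing, which is the strict concavity of `h` seen through secants from
`h(0) = 0`.
-/

noncomputable def binEnt2 (p : ℝ) : ℝ := -(p * Real.logb 2 p) - (1 - p) * Real.logb 2 (1 - p)

open Real

lemma binEnt2_eq_binEntropy_div_log_two (p : ℝ) : binEnt2 p = binEntropy p / log 2 := by
  simp only [binEnt2, binEntropy, logb, log_inv]
  ring

lemma strictAntiOn_binEntropy_div_self :
    StrictAntiOn (fun p => binEntropy p / p) (Set.Ioc 0 1) := by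
  intro x hx y hy hxy
  have hzero : (0 : ℝ) ∈ Set.Icc 0 1 := ⟨le_rfl, zero_le_one⟩
  simpa using strictConcave_binEntropy.secant_strict_mono hzero (Set.Ioc_subset_Icc_self hx)
    (Set.Ioc_subset_Icc_self hy) hx.1.ne' hy.1.ne' hxy

/-- Both sides are the entropy of the distribution `(a, b - a, 1 - b)`. -/
lemma binEntropy_add_mul_binEntropy_div {a b : ℝ} (ha : 0 < a) (hab : a < b) (hb : b < 1) :
    binEntropy b + b * binEntropy (a / b) =
      binEntropy a + (1 - a) * binEntropy ((b - a) / (1 - a)) := by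
  have hb₀ : 0 < b := ha.trans hab
  have hba : 0 < b - a := by linarith
  have h1a : 0 < 1 - a := by linarith
  have h1b : 0 < 1 - b := by linarith
  simp only [binEntropy, log_inv]
  rw [show 1 - a / b = (b - a) / b by field_simp,
    show 1 - (b - a) / (1 - a) = (1 - b) / (1 - a) by field_simp; ring,
    log_div ha.ne' hb₀.ne', log_div hba.ne' hb₀.ne', log_div hba.ne' h1a.ne',
    log_div h1b.ne' h1a.ne']
  field_simp
  ring

lemma mul_binEntropy_div_lt {a b : ℝ} (ha : 0 < a) (hab : a < b) (hsum : a + b < 1) :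
    b * binEntropy (a / b) < (1 - a) * binEntropy ((b - a) / (1 - a)) := by
  have hb₀ : 0 < b := ha.trans hab
  have hba : 0 < b - a := by linarith
  have h1a : 0 < 1 - a := by linarith
  have hp₁ : (b - a) / b ∈ Set.Ioc 0 1 :=
    ⟨by positivity, (div_le_one hb₀).2 (by linarith)⟩
  have hp₂ : (b - a) / (1 - a) ∈ Set.Ioc 0 1 :=
    ⟨by positivity, (div_le_one h1a).2 (by linarith)⟩
  have hlt : (b - a) / (1 - a) < (b - a) / b := div_lt_div_of_pos_left hba hb₀ (by linarith)
  have hslope := strictAntiOn_binEntropy_div_self hp₂ hp₁ hlt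
  rw [show a / b = 1 - (b - a) / b by field_simp; ring, binEntropy_one_sub]
  simp only [div_div_eq_mul_div] at hslope
  linarith [(div_lt_div_iff_of_pos_right hba).1 hslope]

/-- For `0 < α₁ < α₂ < 1/2`, the stationary probability `α₂/(1−α₁+α₂)` is strictly smaller
than the threshold of the decision rule. -/
theorem stationary_below_threshold (α₁ α₂ : ℝ)
    (h1 : 0 < α₁) (h12 : α₁ < α₂) (h2 : α₂ < 1 / 2) :
    α₂ / (1 - α₁ + α₂) <
      (binEnt2 α₂ - binEnt2 α₁ + α₂ * binEnt2 (α₁ / α₂)) /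
        (α₂ * binEnt2 (α₁ / α₂) + (1 - α₁) * binEnt2 ((α₂ - α₁) / (1 - α₁))) := by
  set H₁ := binEntropy (α₁ / α₂)
  set H₂ := binEntropy ((α₂ - α₁) / (1 - α₁))
  have hα₂ : 0 < α₂ := h1.trans h12
  have hL : 0 < log 2 := log_pos one_lt_two
  have hH₁ : 0 ≤ H₁ := binEntropy_nonneg (by positivity) ((div_le_one hα₂).2 h12.le)
  have hH₂ : 0 < H₂ := binEntropy_pos (div_pos (by linarith) (by linarith))
    ((div_lt_one (by linarith)).2 (by linarith))
  have hkey : α₂ * H₁ < (1 - α₁) * H₂ := mul_binEntropy_div_lt h1 h12 (by linarith)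
  have hgroup := binEntropy_add_mul_binEntropy_div h1 h12 (by linarith)
  have hnum : binEnt2 α₂ - binEnt2 α₁ + α₂ * binEnt2 (α₁ / α₂) = (1 - α₁) * H₂ / log 2 := by
    simp only [binEnt2_eq_binEntropy_div_log_two]
    field_simp
    linarith
  have hden : α₂ * binEnt2 (α₁ / α₂) + (1 - α₁) * binEnt2 ((α₂ - α₁) / (1 - α₁)) =
      (α₂ * H₁ + (1 - α₁) * H₂) / log 2 := by
    simp only [binEnt2_eq_binEntropy_div_log_two]
    ring
  rw [hnum, hden, div_div_div_cancel_right₀ hL.ne',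
    div_lt_div_iff₀ (by linarith) (by nlinarith)]
  nlinarith [mul_lt_mul_of_pos_left hkey hα₂, mul_pos (mul_pos hH₂ (by linarith : 0 < 1 - α₁))
    (by linarith : 0 < 1 - α₁ - α₂)]
end

section
/- Let γ = (γ₁, ..., γ_N) be a probability vector with constraints a_i ≤ γ_i ≤ b_i, where a_i ≤ a_{i+1}, b_i ≤ b_{i+1} for all i, Σ a_i ≤ 1 and Σ b_i ≥ 1. Then there exists an index k and a feasible probability vector γ* with γ*_i = b_i for all i > k, γ*_i = a_i for all i < k, and γ*_k = 1 − Σ_{i≠k} γ*_i, such that γ* achieves the minimum Shannon entropy among all feasible probability vectors. -/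
open Finset

/-- A probability vector is feasible if it respects the bounds `a i ≤ γ i ≤ b i` and sums
to one. -/
def Feasible {N : ℕ} (a b γ : Fin (N + 1) → ℝ) : Prop :=
  (∀ i, 0 ≤ γ i) ∧ (∀ i, a i ≤ γ i ∧ γ i ≤ b i) ∧ ∑ i, γ i = 1

lemma key_pointwise {x y : ℝ} (hy : 0 < y) (hx : 0 ≤ x) :
    (Real.log y + 1) * (x - y) ≤ x * Real.log x - y * Real.log y := by
  rcases eq_or_lt_of_le hx with h | h
  · subst x; simp; nlinarith [hy.le]
  · have h1 : Real.log (y / x) ≤ y / x - 1 := Real.log_le_sub_one_of_pos (by positivity)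
    rw [Real.log_div hy.ne' h.ne'] at h1
    have h2 : x * (Real.log y - Real.log x) ≤ y - x := by
      have := mul_le_mul_of_nonneg_left h1 h.le
      rw [mul_sub] at this
      calc x * (Real.log y - Real.log x) ≤ x * (y / x - 1) := by nlinarith
        _ = y - x := by field_simp
    nlinarith

lemma maj_sum_log (n : ℕ) (x y : ℕ → ℝ)
    (hx0 : ∀ i, i < n → 0 ≤ x i)
    (hy0 : ∀ i, i < n → 0 ≤ y i)
    (hym : ∀ i j, i ≤ j → j < n → y i ≤ y j)
    (hpre : ∀ m, m ≤ n → ∑ i ∈ range m, x i ≤ ∑ i ∈ range m, y i)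
    (htot : ∑ i ∈ range n, x i = ∑ i ∈ range n, y i) :
    ∑ i ∈ range n, y i * Real.log (y i) ≤ ∑ i ∈ range n, x i * Real.log (x i) := by
  have hPex : ∃ m, n ≤ m ∨ 0 < y m := ⟨n, Or.inl le_rfl⟩
  set m0 := Nat.find hPex with hm0def
  have hm0 : n ≤ m0 ∨ 0 < y m0 := Nat.find_spec hPex
  have hm0le : m0 ≤ n := Nat.find_le (Or.inl le_rfl)
  have hyzero : ∀ i, i < m0 → y i = 0 := by
    intro i hi
    have := Nat.find_min hPex hi
    push_neg at this
    exact le_antisymm this.2 (hy0 i (lt_of_lt_of_le hi hm0le))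
  have hY0 : ∑ i ∈ range m0, y i = 0 := by
    apply Finset.sum_eq_zero; intro i hi; exact hyzero i (mem_range.mp hi)
  have hX0 : ∑ i ∈ range m0, x i = 0 := by
    have h1 := hpre m0 hm0le
    rw [hY0] at h1
    have h2 : 0 ≤ ∑ i ∈ range m0, x i :=
      Finset.sum_nonneg fun i hi => hx0 i (lt_of_lt_of_le (mem_range.mp hi) hm0le)
    linarith
  have hxzero : ∀ i, i < m0 → x i = 0 := by
    intro i hi
    have := (Finset.sum_eq_zero_iff_of_nonneg (fun j hj =>
      hx0 j (lt_of_lt_of_le (mem_range.mp hj) hm0le))).mp hX0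
    exact this i (mem_range.mpr hi)
  have hypos : ∀ i, m0 ≤ i → i < n → 0 < y i := by
    intro i h1 h2
    have hm0n : m0 < n := lt_of_le_of_lt h1 h2
    have : 0 < y m0 := hm0.resolve_left (by omega)
    exact lt_of_lt_of_le this (hym m0 i h1 h2)
  have hsplitx : ∑ i ∈ range n, x i * Real.log (x i)
      = ∑ i ∈ Finset.Ico m0 n, x i * Real.log (x i) := by
    rw [range_eq_Ico, ← Finset.sum_Ico_consecutive _ (Nat.zero_le m0) hm0le]
    rw [← range_eq_Ico]
    have : ∑ i ∈ range m0, x i * Real.log (x i) = 0 := by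
      apply Finset.sum_eq_zero; intro i hi; rw [hxzero i (mem_range.mp hi)]; simp
    rw [this, zero_add]
  have hsplity : ∑ i ∈ range n, y i * Real.log (y i)
      = ∑ i ∈ Finset.Ico m0 n, y i * Real.log (y i) := by
    rw [range_eq_Ico, ← Finset.sum_Ico_consecutive _ (Nat.zero_le m0) hm0le]
    rw [← range_eq_Ico]
    have : ∑ i ∈ range m0, y i * Real.log (y i) = 0 := by
      apply Finset.sum_eq_zero; intro i hi; rw [hyzero i (mem_range.mp hi)]; simp
    rw [this, zero_add]
  rw [hsplitx, hsplity, ← sub_nonneg, ← Finset.sum_sub_distrib]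
  have step1 : ∑ i ∈ Finset.Ico m0 n, (Real.log (y i) + 1) * (x i - y i)
      ≤ ∑ i ∈ Finset.Ico m0 n, (x i * Real.log (x i) - y i * Real.log (y i)) := by
    apply Finset.sum_le_sum
    intro i hi
    rw [Finset.mem_Ico] at hi
    exact key_pointwise (hypos i hi.1 hi.2) (hx0 i hi.2)
  refine le_trans ?_ step1
  have hIco_d : ∀ m, m0 ≤ m → m ≤ n → ∑ i ∈ Finset.Ico m0 m, (x i - y i)
      = ∑ i ∈ range m, x i - ∑ i ∈ range m, y i := by
    intro m h1 h2
    rw [Finset.sum_sub_distrib]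
    rw [Finset.sum_Ico_eq_sub _ h1, Finset.sum_Ico_eq_sub _ h1, hX0, hY0]
    ring
  have hdtot : ∑ i ∈ Finset.Ico m0 n, (x i - y i) = 0 := by
    rw [hIco_d n hm0le le_rfl, htot]; ring
  have hexpand : ∑ i ∈ Finset.Ico m0 n, (Real.log (y i) + 1) * (x i - y i)
      = ∑ i ∈ Finset.Ico m0 n, Real.log (y i) * (x i - y i) := by
    have : ∀ i, (Real.log (y i) + 1) * (x i - y i)
        = Real.log (y i) * (x i - y i) + (x i - y i) := by intro i; ring
    simp_rw [this, Finset.sum_add_distrib, hdtot, add_zero]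
  rw [hexpand]
  rw [Finset.sum_Ico_eq_sum_range]
  set p := n - m0 with hp
  set G : ℕ → ℝ := fun i => Real.log (y (m0 + i)) with hG
  set d : ℕ → ℝ := fun i => x (m0 + i) - y (m0 + i) with hd
  have : ∑ i ∈ range p, Real.log (y (m0 + i)) * (x (m0 + i) - y (m0 + i))
      = ∑ i ∈ range p, G i • d i := by simp [hG, hd]
  rw [this, Finset.sum_range_by_parts]
  have hDtot : ∑ i ∈ range p, d i = 0 := by
    rw [← hdtot, Finset.sum_Ico_eq_sum_range]
  rw [hDtot, smul_zero, zero_sub, neg_nonneg]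
  apply Finset.sum_nonpos
  intro i hi
  rw [mem_range] at hi
  have hip : i + 1 < p := by omega
  have h1 : m0 + i < n := by omega
  have h2 : m0 + (i + 1) < n := by omega
  have hGmono : G i ≤ G (i + 1) := by
    apply Real.log_le_log (hypos _ (Nat.le_add_right _ _) h1)
    exact hym _ _ (by omega) h2
  have hDneg : ∑ j ∈ range (i + 1), d j ≤ 0 := by
    have heq : ∑ j ∈ range (i + 1), d j = ∑ j ∈ Finset.Ico m0 (m0 + (i + 1)), (x j - y j) := by
      rw [Finset.sum_Ico_eq_sum_range]; simp [hd]
    rw [heq, hIco_d (m0 + (i + 1)) (by omega) (by omega)]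
    have := hpre (m0 + (i + 1)) (by omega)
    linarith
  have hs : (G (i + 1) - G i) • ∑ j ∈ range (i + 1), d j
      = (G (i + 1) - G i) * ∑ j ∈ range (i + 1), d j := by simp
  rw [hs]
  exact mul_nonpos_of_nonneg_of_nonpos (by linarith) hDneg

lemma sum_first_le_sum_subset {n m : ℕ} (hm : m ≤ n) (c : Fin n → ℝ) (hc : Monotone c)
    (S : Finset (Fin n)) (hS : S.card = m) :
    ∑ j : Fin m, c (Fin.castLE hm j) ≤ ∑ i ∈ S, c i := by
  set e := S.orderEmbOfFin hS with he
  have hSimg : S = Finset.image e Finset.univ := by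
    apply Finset.eq_of_subset_of_card_le
    · intro x hx
      have : x ∈ Set.range e := by rw [Finset.range_orderEmbOfFin]; exact hx
      obtain ⟨j, hj⟩ := this
      exact Finset.mem_image.mpr ⟨j, Finset.mem_univ j, hj⟩
    · rw [hS]
      exact le_trans Finset.card_image_le (by simp)
  have hsum : ∑ i ∈ S, c i = ∑ j : Fin m, c (e j) := by
    rw [hSimg, Finset.sum_image (fun x _ y _ h => e.injective h)]
  rw [hsum]
  apply Finset.sum_le_sum
  intro j _
  apply hc
  have key : ∀ jv, ∀ h : jv < m, jv ≤ ((e ⟨jv, h⟩ : Fin n) : ℕ) := by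
    intro jv
    induction jv with
    | zero => intro h; exact Nat.zero_le _
    | succ i ih =>
      intro h
      have h' : i < m := by omega
      have hlt : e ⟨i, h'⟩ < e ⟨i + 1, h⟩ := e.strictMono (by simp [Fin.lt_def])
      have := ih h'
      rw [Fin.lt_def] at hlt
      omega
  have := key j.val j.isLt
  simp only [Fin.eta] at this
  rw [Fin.le_def]
  simpa using this

/-- There is an entropy-minimizing feasible vector of greedy form: upper bounds saturated
above some index `k`, lower bounds saturated below `k`, and the remaining mass at `k`. -/
theorem min_entropy_greedy_form (N : ℕ) (a b : Fin (N + 1) → ℝ)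
    (ha0 : ∀ i, 0 ≤ a i) (hamono : Monotone a) (hbmono : Monotone b)
    (hab : ∀ i, a i ≤ b i) (hasum : ∑ i, a i ≤ 1) (hbsum : 1 ≤ ∑ i, b i) :
    ∃ (k : Fin (N + 1)) (γ : Fin (N + 1) → ℝ), Feasible a b γ ∧
      (∀ i, k < i → γ i = b i) ∧ (∀ i, i < k → γ i = a i) ∧
      γ k = 1 - ∑ i ∈ univ.erase k, γ i ∧
      ∀ δ : Fin (N + 1) → ℝ, Feasible a b δ →
        ∑ i, Real.negMulLog (γ i) ≤ ∑ i, Real.negMulLog (δ i) := by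
  set a' : ℕ → ℝ := fun i => a ⟨min i N, by omega⟩ with ha'
  set b' : ℕ → ℝ := fun i => b ⟨min i N, by omega⟩ with hb'
  have ha'eq : ∀ i : Fin (N + 1), a' (i : ℕ) = a i := by
    intro i; simp only [ha']; congr 1; exact Fin.ext (by simp [Nat.lt_succ_iff.mp i.isLt])
  have hb'eq : ∀ i : Fin (N + 1), b' (i : ℕ) = b i := by
    intro i; simp only [hb']; congr 1; exact Fin.ext (by simp [Nat.lt_succ_iff.mp i.isLt])
  set A : ℕ → ℝ := fun m => ∑ i ∈ range m, a' i with hA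
  set B : ℕ → ℝ := fun m => ∑ i ∈ range m, b' i with hB
  have hAn : A (N + 1) = ∑ i, a i := by
    show ∑ i ∈ range (N + 1), a' i = _
    rw [← Fin.sum_univ_eq_sum_range a' (N + 1)]
    exact Finset.sum_congr rfl (fun i _ => ha'eq i)
  have hBn : B (N + 1) = ∑ i, b i := by
    show ∑ i ∈ range (N + 1), b' i = _
    rw [← Fin.sum_univ_eq_sum_range b' (N + 1)]
    exact Finset.sum_congr rfl (fun i _ => hb'eq i)
  have hAsucc : ∀ m, A (m + 1) = A m + a' m := fun m => Finset.sum_range_succ a' m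
  have hBsucc : ∀ m, B (m + 1) = B m + b' m := fun m => Finset.sum_range_succ b' m
  have hA0 : A 0 = 0 := Finset.sum_range_zero a'
  have hB0 : B 0 = 0 := Finset.sum_range_zero b'
  -- choose k
  have hPex : ∃ m, A (m + 1) + (B (N + 1) - B (m + 1)) ≤ 1 := ⟨N, by rw [hAn]; linarith⟩
  obtain ⟨k, hkspec, hkmin⟩ : ∃ k, (A (k + 1) + (B (N + 1) - B (k + 1)) ≤ 1) ∧
      ∀ m, m < k → ¬(A (m + 1) + (B (N + 1) - B (m + 1)) ≤ 1) :=
    ⟨Nat.find hPex, Nat.find_spec hPex, fun m hm => Nat.find_min hPex hm⟩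
  have hkN : k ≤ N := by
    by_contra hc
    exact hkmin N (by omega) (by rw [hAn]; linarith)
  have hkn : k < N + 1 := by omega
  set v : ℝ := 1 - A k - (B (N + 1) - B (k + 1)) with hv
  set kf : Fin (N + 1) := ⟨k, hkn⟩ with hkf
  set γ : Fin (N + 1) → ℝ := fun i => if (i : ℕ) < k then a i else if k < (i : ℕ) then b i else v
    with hγ
  have hγk : γ kf = v := by simp [hγ, hkf]
  have hγlt : ∀ i : Fin (N + 1), (i : ℕ) < k → γ i = a i := by intro i hi; simp [hγ, hi]
  have hγgt : ∀ i : Fin (N + 1), k < (i : ℕ) → γ i = b i := by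
    intro i hi; simp [hγ, hi, Nat.lt_asymm hi]
  have ha'k : a' k = a kf := ha'eq kf
  have hb'k : b' k = b kf := hb'eq kf
  -- bounds on v
  have hva : a kf ≤ v := by
    rw [← ha'k]
    rw [hAsucc k] at hkspec
    rw [hv]; linarith
  have hvb : v ≤ b kf := by
    rw [← hb'k]
    rcases Nat.eq_zero_or_pos k with hk0 | hk0
    · rw [hv, hk0, hBsucc 0, hA0, hB0, hBn]
      linarith [hbsum]
    · have hmin := hkmin (k - 1) (by omega)
      push_neg at hmin
      have hk1 : k - 1 + 1 = k := by omega
      rw [hk1] at hmin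
      rw [hv, hBsucc k]; linarith
  -- monotonicity of γ
  have hγmono : Monotone γ := by
    intro i j hij
    have hij' : (i : ℕ) ≤ (j : ℕ) := hij
    rcases lt_trichotomy ((i : ℕ)) k with hi | hi | hi
    · rw [hγlt i hi]
      rcases lt_trichotomy ((j : ℕ)) k with hj | hj | hj
      · rw [hγlt j hj]; exact hamono hij
      · have hjk : j = kf := Fin.ext (by simp [hkf, hj])
        rw [hjk, hγk]
        exact le_trans (hamono (show i ≤ kf by rw [Fin.le_def]; simp [hkf]; omega)) hva
      · rw [hγgt j hj]; exact le_trans (hamono hij) (hab j)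
    · have hik : i = kf := Fin.ext (by simp [hkf, hi])
      rcases eq_or_lt_of_le hij' with hj | hj
      · have : j = i := Fin.ext (by omega)
        rw [this]
      · have hjk : k < (j : ℕ) := by omega
        rw [hik, hγk, hγgt j hjk]
        exact le_trans hvb (hbmono (show kf ≤ j by rw [Fin.le_def]; simp [hkf]; omega))
    · rw [hγgt i hi, hγgt j (by omega)]
      exact hbmono hij
  -- feasibility bounds
  have hγbounds : ∀ i, a i ≤ γ i ∧ γ i ≤ b i := by
    intro i
    rcases lt_trichotomy ((i : ℕ)) k with hi | hi | hi
    · rw [hγlt i hi]; exact ⟨le_rfl, hab i⟩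
    · have hik : i = kf := Fin.ext (by simp [hkf, hi])
      rw [hik, hγk]; exact ⟨hva, hvb⟩
    · rw [hγgt i hi]; exact ⟨hab i, le_rfl⟩
  have hγ0 : ∀ i, 0 ≤ γ i := fun i => le_trans (ha0 i) (hγbounds i).1
  -- ℕ-indexed γ and prefix sums
  set γ'' : ℕ → ℝ := fun i => γ ⟨min i N, by omega⟩ with hγ''
  have hγ''eq : ∀ i : Fin (N + 1), γ'' (i : ℕ) = γ i := by
    intro i; simp only [hγ'']; congr 1; exact Fin.ext (by simp [Nat.lt_succ_iff.mp i.isLt])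
  set Γ : ℕ → ℝ := fun m => ∑ i ∈ range m, γ'' i with hΓ
  have hΓlow : ∀ m, m ≤ k → Γ m = A m := by
    intro m hm
    apply Finset.sum_congr rfl
    intro i hi
    rw [mem_range] at hi
    have hiN : i < N + 1 := by omega
    have h1 : γ'' i = γ ⟨i, hiN⟩ := by
      simp only [hγ'']; congr 1; exact Fin.ext (by simp; omega)
    have h2 : a' i = a ⟨i, hiN⟩ := by
      simp only [ha']; congr 1; exact Fin.ext (by simp; omega)
    rw [h1, h2, hγlt ⟨i, hiN⟩ (by simp; omega)]
  have hγ''k : γ'' k = v := by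
    have : γ'' k = γ kf := by
      simp only [hγ'']; congr 1; exact Fin.ext (by simp [hkf]; omega)
    rw [this, hγk]
  have hΓhigh : ∀ m, k < m → m ≤ N + 1 → Γ m = 1 - (B (N + 1) - B m) := by
    intro m hm1 hm2
    have hsplit : Γ m = Γ (k + 1) + ∑ i ∈ Finset.Ico (k + 1) m, γ'' i := by
      show ∑ i ∈ range m, γ'' i = _
      rw [range_eq_Ico, ← Finset.sum_Ico_consecutive _ (Nat.zero_le (k + 1)) (by omega),
        ← range_eq_Ico]
    have hΓk1 : Γ (k + 1) = A k + v := by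
      show ∑ i ∈ range (k + 1), γ'' i = _
      rw [Finset.sum_range_succ, hγ''k]
      have : ∑ i ∈ range k, γ'' i = A k := hΓlow k le_rfl
      rw [this]
    have hIcob : ∑ i ∈ Finset.Ico (k + 1) m, γ'' i = B m - B (k + 1) := by
      have hcong : ∑ i ∈ Finset.Ico (k + 1) m, γ'' i = ∑ i ∈ Finset.Ico (k + 1) m, b' i := by
        apply Finset.sum_congr rfl
        intro i hi
        rw [Finset.mem_Ico] at hi
        have hiN : i < N + 1 := by omega
        have h1 : γ'' i = γ ⟨i, hiN⟩ := by
          simp only [hγ'']; congr 1; exact Fin.ext (by simp; omega)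
        have h2 : b' i = b ⟨i, hiN⟩ := by
          simp only [hb']; congr 1; exact Fin.ext (by simp; omega)
        rw [h1, h2, hγgt ⟨i, hiN⟩ (by simp; omega)]
      rw [hcong, Finset.sum_Ico_eq_sub b' (by omega)]
    rw [hsplit, hΓk1, hIcob, hv]
    ring
  have hΓn : Γ (N + 1) = 1 := by
    rw [hΓhigh (N + 1) (by omega) le_rfl]
    ring
  have hγsum : ∑ i, γ i = 1 := by
    rw [← hΓn]
    show _ = ∑ i ∈ range (N + 1), γ'' i
    rw [← Fin.sum_univ_eq_sum_range γ'' (N + 1)]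
    exact Finset.sum_congr rfl (fun i _ => (hγ''eq i).symm)
  have hFeas : Feasible a b γ := ⟨hγ0, hγbounds, hγsum⟩
  refine ⟨kf, γ, hFeas, ?_, ?_, ?_, ?_⟩
  · intro i hi; exact hγgt i hi
  · intro i hi; exact hγlt i hi
  · have := Finset.add_sum_erase univ γ (mem_univ kf)
    rw [hγsum] at this
    linarith
  -- minimality
  intro δ hδ
  obtain ⟨hδ0, hδbd, hδ1⟩ := hδ
  set σ := Tuple.sort δ with hσ
  set δs : Fin (N + 1) → ℝ := δ ∘ σ with hδs
  have hδsmono : Monotone δs := Tuple.monotone_sort δ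
  set δ'' : ℕ → ℝ := fun i => δs ⟨min i N, by omega⟩ with hδ''
  have hδ''eq : ∀ i : Fin (N + 1), δ'' (i : ℕ) = δs i := by
    intro i; simp only [hδ'']; congr 1; exact Fin.ext (by simp [Nat.lt_succ_iff.mp i.isLt])
  set Δ : ℕ → ℝ := fun m => ∑ i ∈ range m, δ'' i with hΔ
  have hΔn : Δ (N + 1) = 1 := by
    have h1 : Δ (N + 1) = ∑ i, δs i := by
      show ∑ i ∈ range (N + 1), δ'' i = _
      rw [← Fin.sum_univ_eq_sum_range δ'' (N + 1)]
      exact Finset.sum_congr rfl (fun i _ => hδ''eq i)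
    have h2 : ∑ i, δs i = ∑ i, δ i := Equiv.sum_comp σ δ
    rw [h1, h2, hδ1]
  have hpre : ∀ m, m ≤ N + 1 → Γ m ≤ Δ m := by
    intro m hm
    set S : Finset (Fin (N + 1)) :=
      Finset.image (fun j : Fin m => σ (Fin.castLE hm j)) univ with hS
    have hinj : Function.Injective (fun j : Fin m => σ (Fin.castLE hm j)) :=
      fun x y h => Fin.castLE_injective hm (σ.injective h)
    have hScard : S.card = m := by
      rw [hS, Finset.card_image_of_injective _ hinj, Finset.card_univ, Fintype.card_fin]
    have hΔS : Δ m = ∑ i ∈ S, δ i := by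
      rw [hS, Finset.sum_image (fun x _ y _ h => hinj h)]
      show ∑ i ∈ range m, δ'' i = _
      rw [← Fin.sum_univ_eq_sum_range δ'' m]
      apply Finset.sum_congr rfl
      intro j _
      have hcast : (⟨min (j : ℕ) N, by omega⟩ : Fin (N + 1)) = Fin.castLE hm j := by
        apply Fin.ext; simp [Fin.castLE]; omega
      simp only [hδ'', hδs, hcast, Function.comp]
    have hAcast : ∀ (c : Fin (N + 1) → ℝ) (c' : ℕ → ℝ),
        (∀ i : ℕ, (h : i < N + 1) → c' i = c ⟨i, h⟩) →
        ∑ i ∈ range m, c' i = ∑ j : Fin m, c (Fin.castLE hm j) := by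
      intro c c' hc
      rw [← Fin.sum_univ_eq_sum_range c' m]
      apply Finset.sum_congr rfl
      intro j _
      rw [hc (j : ℕ) (by omega)]
      congr 1
    have ha'cast : ∀ i : ℕ, (h : i < N + 1) → a' i = a ⟨i, h⟩ := by
      intro i h; simp only [ha']; congr 1; exact Fin.ext (by simp; omega)
    have hb'cast : ∀ i : ℕ, (h : i < N + 1) → b' i = b ⟨i, h⟩ := by
      intro i h; simp only [hb']; congr 1; exact Fin.ext (by simp; omega)
    have h1 : A m ≤ Δ m := by
      rw [hΔS]
      calc A m = ∑ j : Fin m, a (Fin.castLE hm j) := hAcast a a' ha'cast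
        _ ≤ ∑ i ∈ S, a i := sum_first_le_sum_subset hm a hamono S hScard
        _ ≤ ∑ i ∈ S, δ i := Finset.sum_le_sum (fun i _ => (hδbd i).1)
    have h2 : 1 - (B (N + 1) - B m) ≤ Δ m := by
      rw [hΔS]
      have hbS : B m ≤ ∑ i ∈ S, b i := by
        calc B m = ∑ j : Fin m, b (Fin.castLE hm j) := hAcast b b' hb'cast
          _ ≤ ∑ i ∈ S, b i := sum_first_le_sum_subset hm b hbmono S hScard
      have hδc : ∑ i ∈ Sᶜ, δ i ≤ ∑ i ∈ Sᶜ, b i := Finset.sum_le_sum (fun i _ => (hδbd i).2)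
      have hsplitb : ∑ i ∈ S, b i + ∑ i ∈ Sᶜ, b i = ∑ i, b i := Finset.sum_add_sum_compl S b
      have hsplitδ : ∑ i ∈ S, δ i + ∑ i ∈ Sᶜ, δ i = ∑ i, δ i := Finset.sum_add_sum_compl S δ
      rw [hδ1] at hsplitδ
      rw [← hBn] at hsplitb
      linarith
    rcases le_or_gt m k with h | h
    · rw [hΓlow m h]; exact h1
    · rw [hΓhigh m h hm]; exact h2
  have hmain : ∑ i ∈ range (N + 1), δ'' i * Real.log (δ'' i)
      ≤ ∑ i ∈ range (N + 1), γ'' i * Real.log (γ'' i) := by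
    apply maj_sum_log (N + 1) γ'' δ''
    · intro i hi
      have : γ'' i = γ ⟨i, hi⟩ := by
        simp only [hγ'']; congr 1; exact Fin.ext (by simp; omega)
      rw [this]; exact hγ0 _
    · intro i hi
      have : δ'' i = δs ⟨i, hi⟩ := by
        simp only [hδ'']; congr 1; exact Fin.ext (by simp; omega)
      rw [this]; exact hδ0 _
    · intro i j hij hj
      have hi : i < N + 1 := by omega
      have h1 : δ'' i = δs ⟨i, hi⟩ := by
        simp only [hδ'']; congr 1; exact Fin.ext (by simp; omega)
      have h2 : δ'' j = δs ⟨j, hj⟩ := by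
        simp only [hδ'']; congr 1; exact Fin.ext (by simp; omega)
      rw [h1, h2]
      exact hδsmono (by rw [Fin.le_def]; exact hij)
    · exact hpre
    · show Γ (N + 1) = Δ (N + 1)
      rw [hΓn, hΔn]
  have hγlog : ∑ i, Real.negMulLog (γ i) = -∑ i ∈ range (N + 1), γ'' i * Real.log (γ'' i) := by
    rw [← Fin.sum_univ_eq_sum_range (fun i => γ'' i * Real.log (γ'' i)) (N + 1)]
    rw [← Finset.sum_neg_distrib]
    apply Finset.sum_congr rfl
    intro i _
    rw [hγ''eq i, Real.negMulLog]
    ring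
  have hδlog : ∑ i, Real.negMulLog (δ i) = -∑ i ∈ range (N + 1), δ'' i * Real.log (δ'' i) := by
    have hperm : ∑ i, Real.negMulLog (δ i) = ∑ i, Real.negMulLog (δs i) :=
      (Equiv.sum_comp σ (fun i => Real.negMulLog (δ i))).symm
    rw [hperm, ← Fin.sum_univ_eq_sum_range (fun i => δ'' i * Real.log (δ'' i)) (N + 1)]
    rw [← Finset.sum_neg_distrib]
    apply Finset.sum_congr rfl
    intro i _
    rw [hδ''eq i, Real.negMulLog]
    ring
  rw [hγlog, hδlog]
  linarith
end
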